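/- Let ω ⊂ ℝ² and suppose for all v ∈ H¹(ω)²: inf_{α∈ℝ} ‖curl v - 2α‖²_{L²(ω)} ≤ 2(C_K²-1)‖ε(v)‖²_{L²(ω)}. Then every divergence-free tensor field τ ∈ H(div, ω) of the form τ = ∇⊥v with v ∈ H¹(ω)² satisfies inf_{β∈ℝ} ‖tr τ - β‖_{L²(ω)} ≤ 2(C_K² - 1)^{1/2}·‖dev τ‖_{L²(ω)}, i.e., the dev-div constant satisfies C_A ≤ 2(C_K² - 1)^{1/2}. -/

import Mathlib

/-!
For `τ = ∇⊥v` one has `tr τ = curl v` and `|dev τ| = |ε(v)|` pointwise, so the dev-div estimate is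
the curl bound with `β = 2α`, after taking square roots and using `√2 ≤ 2`.
-/

open Matrix

open MeasureTheory

noncomputable def normSq2 (A : Matrix (Fin 2) (Fin 2) ℝ) : ℝ :=
  ∑ i, ∑ j, (A i j) ^ 2

noncomputable def symPart (A : Matrix (Fin 2) (Fin 2) ℝ) : Matrix (Fin 2) (Fin 2) ℝ :=
  ((1 : ℝ) / 2) • (A + Aᵀ)

noncomputable def devPart2 (τ : Matrix (Fin 2) (Fin 2) ℝ) : Matrix (Fin 2) (Fin 2) ℝ :=
  τ - (Matrix.trace τ / 2) • (1 : Matrix (Fin 2) (Fin 2) ℝ)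

noncomputable def curlOf (F : Matrix (Fin 2) (Fin 2) ℝ) : ℝ := F 1 0 - F 0 1

/-- `∇⊥v` in terms of `F = ∇v`: it is `F R` with `R = !![0, 1; -1, 0]`. -/
def rotGrad (F : Matrix (Fin 2) (Fin 2) ℝ) : Matrix (Fin 2) (Fin 2) ℝ :=
  Matrix.of fun i j => if j = 0 then -F i 1 else F i 0

theorem trace_rotGrad (F : Matrix (Fin 2) (Fin 2) ℝ) : trace (rotGrad F) = curlOf F := by
  simp [rotGrad, trace, Fin.sum_univ_two, curlOf]
  ring

/-- `dev (F R) = (sym F) R`: the skew part of `F` times `R` is a multiple of the identity. -/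
theorem normSq2_devPart2_rotGrad (F : Matrix (Fin 2) (Fin 2) ℝ) :
    normSq2 (devPart2 (rotGrad F)) = normSq2 (symPart F) := by
  simp [rotGrad, normSq2, devPart2, symPart, trace, Fin.sum_univ_two, one_apply]
  ring

theorem Real.sqrt_ciInf {ι : Sort*} [Nonempty ι] {f : ι → ℝ} (hf : BddBelow (Set.range f)) :
    √(⨅ i, f i) = ⨅ i, √(f i) :=
  Monotone.map_ciInf_of_continuousAt Real.continuous_sqrt.continuousAt
    (fun _ _ h => Real.sqrt_le_sqrt h) hf

theorem Real.sqrt_two_mul_mul_le (c : ℝ) {a : ℝ} (ha : 0 ≤ a) : √(2 * c * a) ≤ 2 * √c * √a := by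
  rcases le_total 0 c with hc | hc
  · calc √(2 * c * a) ≤ √(2 ^ 2 * c * a) := Real.sqrt_le_sqrt (by nlinarith [mul_nonneg hc ha])
      _ = 2 * √c * √a := by
        rw [Real.sqrt_mul (by positivity), Real.sqrt_mul (by positivity), Real.sqrt_sq zero_le_two]
  · rw [Real.sqrt_eq_zero'.mpr (by nlinarith [mul_nonpos_of_nonpos_of_nonneg hc ha])]
    positivity

theorem dev_div_constant_bound_general {Ω : Type*} [MeasurableSpace Ω] (μm : Measure Ω) (CK : ℝ)
    (Dv : Ω → Matrix (Fin 2) (Fin 2) ℝ)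
    (hcurl : (⨅ α : ℝ, ∫ x, (curlOf (Dv x) - 2 * α) ^ 2 ∂μm) ≤
      2 * (CK ^ 2 - 1) * ∫ x, normSq2 (symPart (Dv x)) ∂μm) :
    let τ : Ω → Matrix (Fin 2) (Fin 2) ℝ :=
      fun x => Matrix.of fun i j => if j = 0 then -Dv x i 1 else Dv x i 0
    (⨅ β : ℝ, Real.sqrt (∫ x, (Matrix.trace (τ x) - β) ^ 2 ∂μm)) ≤
      2 * Real.sqrt (CK ^ 2 - 1) * Real.sqrt (∫ x, normSq2 (devPart2 (τ x)) ∂μm) := by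
  show (⨅ β : ℝ, √(∫ x, (trace (rotGrad (Dv x)) - β) ^ 2 ∂μm)) ≤
    2 * √(CK ^ 2 - 1) * √(∫ x, normSq2 (devPart2 (rotGrad (Dv x))) ∂μm)
  simp only [trace_rotGrad, normSq2_devPart2_rotGrad]
  have hbdd : BddBelow (Set.range fun β : ℝ => ∫ x, (curlOf (Dv x) - β) ^ 2 ∂μm) :=
    ⟨0, by rintro _ ⟨β, rfl⟩; exact integral_nonneg fun x => sq_nonneg _⟩
  have hsymm : 0 ≤ ∫ x, normSq2 (symPart (Dv x)) ∂μm :=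
    integral_nonneg fun x => Finset.sum_nonneg fun i _ => Finset.sum_nonneg fun j _ => sq_nonneg _
  rw [← Real.sqrt_ciInf hbdd, ← (mul_left_surjective₀ two_ne_zero).iInf_comp]
  exact (Real.sqrt_le_sqrt hcurl).trans (Real.sqrt_two_mul_mul_le _ hsymm)

/-- from the curl bound
inf_α ‖curl v - 2α‖²_{L²} ≤ 2(C_K²-1)‖ε(v)‖²_{L²}, every divergence-free tensor
field τ = ∇⊥v satisfies the dev-div estimate
inf_β ‖tr τ - β‖_{L²} ≤ 2(C_K²-1)^{1/2}‖dev τ‖_{L²}, i.e. C_A ≤ 2(C_K²-1)^{1/2}. -/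
theorem dev_div_constant_bound {Ω : Type*} [MeasurableSpace Ω] (μm : Measure Ω) (CK : ℝ)
    (hCK : 1 ≤ CK)
    (Dv : Ω → Matrix (Fin 2) (Fin 2) ℝ)
    (hcurl : (⨅ α : ℝ, ∫ x, (curlOf (Dv x) - 2 * α) ^ 2 ∂μm) ≤
      2 * (CK ^ 2 - 1) * ∫ x, normSq2 (symPart (Dv x)) ∂μm) :
    let τ : Ω → Matrix (Fin 2) (Fin 2) ℝ :=
      fun x => Matrix.of fun i j => if j = 0 then -Dv x i 1 else Dv x i 0
    (⨅ β : ℝ, Real.sqrt (∫ x, (Matrix.trace (τ x) - β) ^ 2 ∂μm)) ≤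
      2 * Real.sqrt (CK ^ 2 - 1) * Real.sqrt (∫ x, normSq2 (devPart2 (τ x)) ∂μm) :=
  dev_div_constant_bound_general μm CK Dv hcurl
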